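/- For any 2-dimensional checkerboard measure P̌ with copula-array skeleton p (n×n, uniform margins), the Spearman rho value ρ(P̌) = ∫_{[0,1]^2} 12(v_1 − 1/2)(v_2 − 1/2) dP̌(v) equals Σ_{i∈[n]^2} p_i · 12(c_{i_1} − 1/2)(c_{i_2} − 1/2) where c_j = (j − 1/2)/n, and this value lies in the interval [−1 + 1/n², 1 − 1/n²]. -/

import Mathlib

/-!
The checkerboard measure is the sum over the boxes `B_i` of `n² p_i` times Lebesgue measure
on `B_i`, and the Spearman kernel factorises on each box, so its integral over `B_i` is `n⁻²`
times its value at the centre of `B_i`. For the bound, `|12 a b| ≤ 6 a² + 6 b²`, and uniform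
margins make the second moment `∑_i p_i (c_{i_ℓ} - 1/2)²` of each coordinate equal to
`(1/n) ∑_j (c_j - 1/2)² = (1 - 1/n²)/12`.
-/

open MeasureTheory Real BigOperators

noncomputable def intA (n : ℕ) (j : Fin n) : Set ℝ :=
  if j.val = 0 then Set.Icc 0 (1 / n) else Set.Ioc ((j.val : ℝ) / n) (((j.val : ℝ) + 1) / n)

noncomputable def box (d n : ℕ) (i : Fin d → Fin n) : Set (Fin d → ℝ) :=
  Set.univ.pi fun ℓ => intA n (i ℓ)

noncomputable def checkMeasure (d n : ℕ) (p : (Fin d → Fin n) → ℝ) :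
    Measure (Fin d → ℝ) :=
  volume.withDensity fun v =>
    ENNReal.ofReal ((n : ℝ) ^ d *
      ∑ i : Fin d → Fin n, (box d n i).indicator (fun _ => p i) v)

def IsProbArray {d n : ℕ} (p : (Fin d → Fin n) → ℝ) : Prop :=
  (∀ i, 0 ≤ p i) ∧ ∑ i : Fin d → Fin n, p i = 1

def IsCopulaArray {d n : ℕ} (p : (Fin d → Fin n) → ℝ) : Prop :=
  IsProbArray p ∧
    ∀ (ℓ : Fin d) (a : Fin n),
      ∑ i ∈ Finset.univ.filter (fun i : Fin d → Fin n => i ℓ = a), p i = 1 / n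

lemma measurableSet_intA (n : ℕ) (j : Fin n) : MeasurableSet (intA n j) := by
  unfold intA; split_ifs <;> measurability

lemma intA_ae_eq_Ioc (n : ℕ) (j : Fin n) :
    intA n j =ᵐ[volume] Set.Ioc ((j : ℝ) / n) (((j : ℝ) + 1) / n) := by
  unfold intA
  split_ifs with h
  · simpa [h] using Ioc_ae_eq_Icc.symm
  · rfl

lemma intA_subset_Icc (n : ℕ) (j : Fin n) : intA n j ⊆ Set.Icc 0 1 := by
  have hj : (j : ℝ) + 1 ≤ n := by exact_mod_cast j.2
  have hj0 : (0 : ℝ) ≤ j := by positivity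
  have hn : (0 : ℝ) < n := by linarith
  unfold intA
  split_ifs
  · exact Set.Icc_subset_Icc le_rfl ((div_le_one hn).2 (by linarith))
  · exact Set.Ioc_subset_Icc_self.trans
      (Set.Icc_subset_Icc (by positivity) ((div_le_one hn).2 hj))

lemma setIntegral_Ioc_sub_const {a b : ℝ} (hab : a ≤ b) (m : ℝ) :
    ∫ x in Set.Ioc a b, (x - m) = (b - a) * ((a + b) / 2 - m) := by
  rw [← intervalIntegral.integral_of_le hab, intervalIntegral.integral_sub
    intervalIntegral.intervalIntegrable_id intervalIntegrable_const, integral_id,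
    intervalIntegral.integral_const, smul_eq_mul]
  ring

/-- The paper's `c_{j+1}`: box indices are `0`-based here. -/
noncomputable def center (n : ℕ) (j : Fin n) : ℝ := ((j : ℝ) + 1 / 2) / n

lemma setIntegral_intA_sub_half (n : ℕ) (j : Fin n) :
    ∫ x in intA n j, (x - 1 / 2) = (center n j - 1 / 2) / n := by
  have hn : (n : ℝ) ≠ 0 := by have := j.pos; positivity
  rw [setIntegral_congr_set (intA_ae_eq_Ioc n j),
    setIntegral_Ioc_sub_const (by gcongr; linarith), center]
  field_simp
  ring

lemma measurableSet_box (d n : ℕ) (i : Fin d → Fin n) : MeasurableSet (box d n i) :=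
  .univ_pi fun ℓ => measurableSet_intA n (i ℓ)

lemma box_subset_Icc (d n : ℕ) (i : Fin d → Fin n) : box d n i ⊆ Set.Icc 0 1 :=
  fun _ hv => ⟨fun ℓ => (intA_subset_Icc n (i ℓ) (hv ℓ trivial)).1,
    fun ℓ => (intA_subset_Icc n (i ℓ) (hv ℓ trivial)).2⟩

lemma setIntegral_box_two_mul (n : ℕ) (i : Fin 2 → Fin n) (f g : ℝ → ℝ) :
    ∫ v in box 2 n i, f (v 0) * g (v 1)
      = (∫ x in intA n (i 0), f x) * ∫ y in intA n (i 1), g y := by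
  have hbox : box 2 n i = MeasurableEquiv.finTwoArrow ⁻¹' (intA n (i 0) ×ˢ intA n (i 1)) := by
    ext v
    simp [box, Set.mem_pi, MeasurableEquiv.finTwoArrow, Fin.forall_fin_two]
  rw [hbox]
  refine ((volume_preserving_finTwoArrow ℝ).setIntegral_preimage_emb
    MeasurableEquiv.finTwoArrow.measurableEmbedding (fun y : ℝ × ℝ => f y.1 * g y.2)
    _).trans ?_
  rw [Measure.volume_eq_prod, setIntegral_prod_mul]

lemma checkMeasure_eq_sum {d n : ℕ} {p : (Fin d → Fin n) → ℝ} (hp : ∀ i, 0 ≤ p i) :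
    checkMeasure d n p
      = ∑ i, ENNReal.ofReal ((n : ℝ) ^ d * p i) • volume.restrict (box d n i) := by
  have hdensity : (fun v => ENNReal.ofReal ((n : ℝ) ^ d *
      ∑ i : Fin d → Fin n, (box d n i).indicator (fun _ => p i) v))
      = ∑' i, (box d n i).indicator fun _ => ENNReal.ofReal ((n : ℝ) ^ d * p i) := by
    ext v
    rw [tsum_fintype, Finset.mul_sum, ENNReal.ofReal_sum_of_nonneg fun i _ =>
      mul_nonneg (by positivity) (Set.indicator_nonneg (fun _ _ => hp i) v), Finset.sum_apply]
    refine Finset.sum_congr rfl fun i _ => ?_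
    by_cases hv : v ∈ box d n i <;> simp [hv]
  rw [checkMeasure, hdensity, withDensity_tsum fun i => measurable_const.indicator
    (measurableSet_box d n i), Measure.sum_fintype]
  simp_rw [withDensity_indicator (measurableSet_box d n _), withDensity_const]

lemma integral_checkMeasure {d n : ℕ} {p : (Fin d → Fin n) → ℝ} (hp : ∀ i, 0 ≤ p i)
    {F : (Fin d → ℝ) → ℝ} (hF : IntegrableOn F (Set.Icc 0 1)) :
    ∫ v, F v ∂(checkMeasure d n p) = ∑ i, (n : ℝ) ^ d * p i * ∫ v in box d n i, F v := by
  rw [checkMeasure_eq_sum hp, integral_finsetSum_measure fun i _ =>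
    ((hF.mono_set (box_subset_Icc d n i)).smul_measure ENNReal.ofReal_ne_top)]
  refine Finset.sum_congr rfl fun i _ => ?_
  rw [integral_smul_measure, ENNReal.toReal_ofReal (mul_nonneg (by positivity) (hp i)),
    smul_eq_mul]

lemma sum_range_sq_two_mul_add_one_sub (m : ℕ) (x : ℝ) :
    ∑ j ∈ Finset.range m, (2 * (j : ℝ) + 1 - x) ^ 2
      = m * (4 * m ^ 2 - 1) / 3 - 2 * x * m ^ 2 + m * x ^ 2 := by
  induction m with
  | zero => simp
  | succ m ih => rw [Finset.sum_range_succ, ih]; push_cast; ring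

lemma sum_sq_center_sub_half {n : ℕ} (hn : n ≠ 0) :
    ∑ j : Fin n, (center n j - 1 / 2) ^ 2 = ((n : ℝ) ^ 2 - 1) / (12 * n) := by
  have hn' : (n : ℝ) ≠ 0 := Nat.cast_ne_zero.2 hn
  have hcenter : ∀ j : ℕ, (((j : ℝ) + 1 / 2) / n - 1 / 2) ^ 2
      = (2 * (j : ℝ) + 1 - n) ^ 2 / (4 * n ^ 2) := fun j => by field_simp; ring
  simp_rw [center, Fin.sum_univ_eq_sum_range (fun j => (((j : ℝ) + 1 / 2) / n - 1 / 2) ^ 2),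
    hcenter, ← Finset.sum_div, sum_range_sq_two_mul_add_one_sub]
  field_simp
  ring

lemma IsCopulaArray.sum_mul_apply {d n : ℕ} {p : (Fin d → Fin n) → ℝ} (hp : IsCopulaArray p)
    (ℓ : Fin d) (g : Fin n → ℝ) :
    ∑ i, p i * g (i ℓ) = (∑ a, g a) / n := by
  rw [← Finset.sum_fiberwise Finset.univ (· ℓ), Finset.sum_div]
  refine Finset.sum_congr rfl fun a _ => ?_
  rw [Finset.sum_congr rfl fun i hi => by rw [(Finset.mem_filter.1 hi).2],
    ← Finset.sum_mul, hp.2 ℓ a]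
  ring

lemma IsProbArray.ne_zero {d n : ℕ} {p : (Fin d → Fin n) → ℝ} (hp : IsProbArray p)
    (ℓ : Fin d) : n ≠ 0 := by
  rintro rfl
  have : IsEmpty (Fin d → Fin 0) := ⟨fun i => (i ℓ).elim0⟩
  simpa using hp.2

lemma IsCopulaArray.sum_mul_sq_center_sub_half {d n : ℕ} {p : (Fin d → Fin n) → ℝ}
    (hp : IsCopulaArray p) (ℓ : Fin d) :
    ∑ i, p i * (center n (i ℓ) - 1 / 2) ^ 2 = (1 - 1 / (n : ℝ) ^ 2) / 12 := by
  have hn : (n : ℝ) ≠ 0 := Nat.cast_ne_zero.2 (hp.1.ne_zero ℓ)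
  rw [hp.sum_mul_apply ℓ fun a => (center n a - 1 / 2) ^ 2,
    sum_sq_center_sub_half (hp.1.ne_zero ℓ)]
  field_simp

lemma abs_mul_le_half_add_sq (a b : ℝ) : |a * b| ≤ (a ^ 2 + b ^ 2) / 2 :=
  abs_le.2 ⟨by nlinarith [two_mul_le_add_sq (-a) b], by nlinarith [two_mul_le_add_sq a b]⟩

lemma IsCopulaArray.abs_sum_spearman_center_le {n : ℕ} {p : (Fin 2 → Fin n) → ℝ}
    (hp : IsCopulaArray p) :
    |∑ i, p i * (12 * (center n (i 0) - 1 / 2) * (center n (i 1) - 1 / 2))|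
      ≤ 1 - 1 / (n : ℝ) ^ 2 :=
  calc _ ≤ ∑ i, |p i * (12 * (center n (i 0) - 1 / 2) * (center n (i 1) - 1 / 2))| :=
        Finset.abs_sum_le_sum_abs _ _
    _ ≤ ∑ i, (6 * (p i * (center n (i 0) - 1 / 2) ^ 2)
          + 6 * (p i * (center n (i 1) - 1 / 2) ^ 2)) := by
        refine Finset.sum_le_sum fun i _ => ?_
        rw [abs_mul, abs_of_nonneg (hp.1.1 i), mul_assoc, abs_mul,
          abs_of_pos (by norm_num : (0 : ℝ) < 12)]
        nlinarith [mul_le_mul_of_nonneg_left (abs_mul_le_half_add_sq (center n (i 0) - 1 / 2)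
          (center n (i 1) - 1 / 2)) (hp.1.1 i)]
    _ = 1 - 1 / (n : ℝ) ^ 2 := by
        rw [Finset.sum_add_distrib, ← Finset.mul_sum, ← Finset.mul_sum,
          hp.sum_mul_sq_center_sub_half 0, hp.sum_mul_sq_center_sub_half 1]
        ring

lemma integral_spearman_checkMeasure {n : ℕ} {p : (Fin 2 → Fin n) → ℝ}
    (hp : ∀ i, 0 ≤ p i) :
    ∫ v, 12 * (v 0 - 1 / 2) * (v 1 - 1 / 2) ∂(checkMeasure 2 n p)
      = ∑ i, p i * (12 * (center n (i 0) - 1 / 2) * (center n (i 1) - 1 / 2)) := by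
  rw [integral_checkMeasure hp (by fun_prop : Continuous fun v : Fin 2 → ℝ =>
    12 * (v 0 - 1 / 2) * (v 1 - 1 / 2)).integrableOn_Icc]
  refine Finset.sum_congr rfl fun i _ => ?_
  have hn : (n : ℝ) ≠ 0 := by have := (i 0).pos; positivity
  rw [setIntegral_box_two_mul n i (fun x => 12 * (x - 1 / 2)) (· - 1 / 2), integral_const_mul,
    setIntegral_intA_sub_half, setIntegral_intA_sub_half]
  field_simp

theorem spearman_rho_of_checkerboard_general
    (n : ℕ)
    (p : (Fin 2 → Fin n) → ℝ) (hp : IsCopulaArray p) :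
    (∫ v, 12 * (v 0 - 1 / 2) * (v 1 - 1 / 2) ∂(checkMeasure 2 n p)
      = ∑ i : Fin 2 → Fin n,
          p i * (12 * (((i 0 : ℝ) + 1 / 2) / n - 1 / 2) *
            (((i 1 : ℝ) + 1 / 2) / n - 1 / 2))) ∧
    (∫ v, 12 * (v 0 - 1 / 2) * (v 1 - 1 / 2) ∂(checkMeasure 2 n p))
      ∈ Set.Icc (-1 + 1 / (n : ℝ) ^ 2) (1 - 1 / (n : ℝ) ^ 2) := by
  have hρ := integral_spearman_checkMeasure hp.1.1
  have hbound := abs_le.1 hp.abs_sum_spearman_center_le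
  exact ⟨hρ, hρ ▸ ⟨by linarith [hbound.1], hbound.2⟩⟩

/-- Spearman's rho of a bivariate checkerboard measure with copula-array
skeleton `p` equals the weighted sum of the Spearman kernel at the box
centers `c_j = (j + 1/2)/n` (`0`-based), and lies in `[−1+1/n², 1−1/n²]`. -/
theorem spearman_rho_of_checkerboard
    (n : ℕ) (hn : 2 ≤ n)
    (p : (Fin 2 → Fin n) → ℝ) (hp : IsCopulaArray p) :
    (∫ v, 12 * (v 0 - 1 / 2) * (v 1 - 1 / 2) ∂(checkMeasure 2 n p)
      = ∑ i : Fin 2 → Fin n,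
          p i * (12 * (((i 0 : ℝ) + 1 / 2) / n - 1 / 2) *
            (((i 1 : ℝ) + 1 / 2) / n - 1 / 2))) ∧
    (∫ v, 12 * (v 0 - 1 / 2) * (v 1 - 1 / 2) ∂(checkMeasure 2 n p))
      ∈ Set.Icc (-1 + 1 / (n : ℝ) ^ 2) (1 - 1 / (n : ℝ) ^ 2) :=
  spearman_rho_of_checkerboard_general n p hp
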